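/- In the same two-node model, as M → ∞ the posterior covariance Σ = (Σ₀⁻¹ + σ⁻²CᵀC)⁻¹ converges entrywise to the matrix with upper-left 2×2 block (σ_θ²σ_β²/(σ_θ²+σ_β²))·[[1,−1],[−1,1]] and all entries of the third row and column equal to 0. -/

import Mathlib

open Matrix Filter

/-- Design matrix of the two-node sync-error model: row `i` is `(1, 1, i·T/(M−1))`. -/
noncomputable def designC (M : ℕ) (T : ℝ) : Matrix (Fin M) (Fin 3) ℝ :=
  Matrix.of fun i j => ![1, 1, (i : ℝ) * T / ((M : ℝ) - 1)] j

/-- Posterior covariance `Σ(M) = (Σ₀⁻¹ + σ⁻²CᵀC)⁻¹`. -/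
noncomputable def postCov (M : ℕ) (T σ σθ σβ σα : ℝ) : Matrix (Fin 3) (Fin 3) ℝ :=
  ((Matrix.diagonal ![σθ ^ 2, σβ ^ 2, σα ^ 2])⁻¹ +
    σ⁻¹ ^ 2 • ((designC M T)ᵀ * designC M T))⁻¹

/-- Limit covariance: upper-left block `c·[[1,−1],[−1,1]]`, zero third row/column. -/
noncomputable def limCov (σθ σβ : ℝ) : Matrix (Fin 3) (Fin 3) ℝ :=
  let c := σθ ^ 2 * σβ ^ 2 / (σθ ^ 2 + σβ ^ 2)
  ![![c, -c, 0], ![-c, c, 0], ![0, 0, 0]]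

/-! With `z = 1/(M-1)` the Gram matrix is `CᵀC = M • G(z)` for a matrix `G(z)` (`gramShape`)
polynomial in `z`, so `z • Σ⁻¹ = K(z)` (`scaledPrecision`) is polynomial in `z`, and
`det K(z) = z F(z)` (`reducedDet`) with `F(0) = σ⁻⁴T²(σθ⁻² + σβ⁻²)/12 ≠ 0`. Hence
`Σ = F(z)⁻¹ • adj K(z)`, which is continuous at `z = 0`. The matrix `K(0) = σ⁻² G(0)` has rank two
with kernel spanned by `(1, -1, 0)`, so `adj K(0)` is a multiple of `(1, -1, 0)ᵀ(1, -1, 0)`. -/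

theorem Matrix.inv_inv_smul_eq_inv_smul_adjugate {n K : Type*} [Fintype n] [DecidableEq n]
    [Nonempty n] [Field K] (A : Matrix n n K) {z F : K} (hz : z ≠ 0) (hdet : A.det = z * F) :
    (z⁻¹ • A)⁻¹ = F⁻¹ • A.adjugate := by
  obtain ⟨k, hk⟩ : ∃ k, Fintype.card n = k + 1 :=
    ⟨_, (Nat.succ_pred_eq_of_pos Fintype.card_pos).symm⟩
  rw [inv_def, det_smul, adjugate_smul, hdet, Ring.inverse_eq_inv', smul_smul, hk,
    Nat.add_sub_cancel]
  congr 1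
  rw [pow_succ, mul_inv, mul_inv, inv_inv]
  field_simp

theorem Finset.sum_range_cast (n : ℕ) : ∑ i ∈ range n, (i : ℝ) = n * (n - 1) / 2 := by
  induction n with
  | zero => simp
  | succ k ih => rw [sum_range_succ, ih]; push_cast; ring

theorem Finset.sum_range_cast_sq (n : ℕ) :
    ∑ i ∈ range n, (i : ℝ) ^ 2 = n * (n - 1) * (2 * n - 1) / 6 := by
  induction n with
  | zero => simp
  | succ k ih => rw [sum_range_succ, ih]; push_cast; ring

noncomputable def gramShape (T z : ℝ) : Matrix (Fin 3) (Fin 3) ℝ :=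
  !![1, 1, T / 2; 1, 1, T / 2; T / 2, T / 2, T ^ 2 * (2 + z) / 6]

theorem designC_transpose_mul_self {M : ℕ} (hM : 2 ≤ M) (T : ℝ) :
    (designC M T)ᵀ * designC M T = (M : ℝ) • gramShape T ((M : ℝ) - 1)⁻¹ := by
  have hM1 : (M : ℝ) - 1 ≠ 0 := by
    have : (2 : ℝ) ≤ M := by exact_mod_cast hM
    linarith
  have hsum : ∑ k : Fin M, (k : ℝ) * T / (M - 1) = M * (T / 2) := by
    rw [← Finset.sum_div, ← Finset.sum_mul, Fin.sum_univ_eq_sum_range (fun k => (k : ℝ)),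
      Finset.sum_range_cast]
    field_simp
  have hsum_sq : ∑ k : Fin M, (k : ℝ) * T / (M - 1) * ((k : ℝ) * T / (M - 1)) =
      M * (T ^ 2 * (2 + ((M : ℝ) - 1)⁻¹) / 6) := by
    simp_rw [← sq, div_pow, mul_pow]
    rw [← Finset.sum_div, ← Finset.sum_mul, Fin.sum_univ_eq_sum_range (fun k => (k : ℝ) ^ 2),
      Finset.sum_range_cast_sq]
    field_simp
    ring
  ext i j
  fin_cases i <;> fin_cases j <;>
    simp [Matrix.mul_apply, designC, gramShape, hsum, hsum_sq]

noncomputable def scaledPrecision (a b c u T z : ℝ) : Matrix (Fin 3) (Fin 3) ℝ :=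
  z • diagonal ![a, b, c] + (u * (1 + z)) • gramShape T z

noncomputable def reducedDet (a b c u T z : ℝ) : ℝ :=
  (z * c + u * (1 + z) * T ^ 2 * (2 + z) / 6) * (z * a * b + u * (1 + z) * (a + b)) -
    u ^ 2 * (1 + z) ^ 2 * T ^ 2 * (a + b) / 4

theorem det_scaledPrecision (a b c u T z : ℝ) :
    (scaledPrecision a b c u T z).det = z * reducedDet a b c u T z := by
  simp only [scaledPrecision, gramShape, reducedDet, det_fin_three, Matrix.add_apply,
    Matrix.smul_apply, smul_of, smul_cons, smul_empty, smul_eq_mul, of_apply, cons_val',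
    cons_val_zero, cons_val_one, cons_val, cons_val_fin_one, diagonal_apply_eq, Fin.isValue,
    ne_eq, Fin.reduceEq, not_false_eq_true, diagonal_apply_ne]
  ring

theorem continuous_scaledPrecision (a b c u T : ℝ) :
    Continuous (scaledPrecision a b c u T) := by
  unfold scaledPrecision gramShape
  fun_prop

theorem continuous_reducedDet (a b c u T : ℝ) : Continuous (reducedDet a b c u T) := by
  unfold reducedDet
  fun_prop

theorem reducedDet_zero (a b c u T : ℝ) :
    reducedDet a b c u T 0 = u ^ 2 * T ^ 2 * (a + b) / 12 := by
  rw [reducedDet]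
  ring

theorem adjugate_scaledPrecision_zero (a b c u T : ℝ) :
    (scaledPrecision a b c u T 0).adjugate =
      (u ^ 2 * T ^ 2 / 12) • !![1, -1, 0; -1, 1, 0; 0, 0, 0] := by
  ext i j
  fin_cases i <;> fin_cases j <;>
    simp only [scaledPrecision, gramShape, adjugate_fin_three, zero_smul, zero_add, smul_of,
      smul_cons, smul_empty, smul_eq_mul, of_apply, Matrix.smul_apply, cons_val', cons_val_zero,
      cons_val_one, cons_val, cons_val_fin_one, Fin.isValue, Fin.zero_eta, Fin.mk_one,
      Fin.reduceFinMk] <;>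
    ring

theorem postCov_eq_smul_adjugate {M : ℕ} (hM : 2 ≤ M) {σθ σβ σα : ℝ} (hθ : σθ ≠ 0)
    (hβ : σβ ≠ 0) (hα : σα ≠ 0) (T σ : ℝ) :
    postCov M T σ σθ σβ σα =
      (reducedDet (σθ ^ 2)⁻¹ (σβ ^ 2)⁻¹ (σα ^ 2)⁻¹ (σ⁻¹ ^ 2) T ((M : ℝ) - 1)⁻¹)⁻¹ •
        (scaledPrecision (σθ ^ 2)⁻¹ (σβ ^ 2)⁻¹ (σα ^ 2)⁻¹ (σ⁻¹ ^ 2) T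
          ((M : ℝ) - 1)⁻¹).adjugate := by
  have hM1 : (M : ℝ) - 1 ≠ 0 := by
    have : (2 : ℝ) ≤ M := by exact_mod_cast hM
    linarith
  have hz : ((M : ℝ) - 1)⁻¹ ≠ 0 := inv_ne_zero hM1
  have hprior : (diagonal ![σθ ^ 2, σβ ^ 2, σα ^ 2])⁻¹ =
      diagonal ![(σθ ^ 2)⁻¹, (σβ ^ 2)⁻¹, (σα ^ 2)⁻¹] := by
    refine inv_eq_left_inv ?_
    rw [diagonal_mul_diagonal, ← diagonal_one]
    congr 1
    ext i
    fin_cases i <;> simp [hθ, hβ, hα]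
  have hprec : diagonal ![(σθ ^ 2)⁻¹, (σβ ^ 2)⁻¹, (σα ^ 2)⁻¹] +
      σ⁻¹ ^ 2 • ((M : ℝ) • gramShape T ((M : ℝ) - 1)⁻¹) =
      ((M : ℝ) - 1)⁻¹⁻¹ • scaledPrecision (σθ ^ 2)⁻¹ (σβ ^ 2)⁻¹ (σα ^ 2)⁻¹ (σ⁻¹ ^ 2) T
        ((M : ℝ) - 1)⁻¹ := by
    rw [scaledPrecision, smul_add, smul_smul, smul_smul, smul_smul, inv_mul_cancel₀ hz,
      one_smul]
    congr 2
    field_simp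
    ring
  rw [postCov, designC_transpose_mul_self hM, hprior, hprec,
    inv_inv_smul_eq_inv_smul_adjugate _ hz (det_scaledPrecision _ _ _ _ _ _)]

theorem tendsto_postCov {σθ σβ σα : ℝ} (hθ : σθ ≠ 0) (hβ : σβ ≠ 0) (hα : σα ≠ 0) {T σ : ℝ}
    (hT : T ≠ 0) (hσ : σ ≠ 0) :
    Tendsto (fun M : ℕ => postCov M T σ σθ σβ σα) atTop
      (nhds (((σθ ^ 2)⁻¹ + (σβ ^ 2)⁻¹)⁻¹ • !![1, -1, 0; -1, 1, 0; 0, 0, 0])) := by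
  set a := (σθ ^ 2)⁻¹
  set b := (σβ ^ 2)⁻¹
  set c := (σα ^ 2)⁻¹
  set u := σ⁻¹ ^ 2
  have hu : u ≠ 0 := by positivity
  have hab : a + b ≠ 0 := by positivity
  have hF : reducedDet a b c u T 0 ≠ 0 := by
    rw [reducedDet_zero]
    positivity
  have hlim : (reducedDet a b c u T 0)⁻¹ • (scaledPrecision a b c u T 0).adjugate =
      (a + b)⁻¹ • !![1, -1, 0; -1, 1, 0; 0, 0, 0] := by
    rw [reducedDet_zero, adjugate_scaledPrecision_zero, smul_smul]
    congr 1
    field_simp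
  have hz : Tendsto (fun M : ℕ => ((M : ℝ) - 1)⁻¹) atTop (nhds 0) :=
    tendsto_inv_atTop_zero.comp (tendsto_atTop_add_const_right _ _ tendsto_natCast_atTop_atTop)
  have hcont : ContinuousAt
      (fun z => (reducedDet a b c u T z)⁻¹ • (scaledPrecision a b c u T z).adjugate) 0 :=
    ((continuous_reducedDet a b c u T).continuousAt.inv₀ hF).smul
      (continuous_scaledPrecision a b c u T).matrix_adjugate.continuousAt
  rw [← hlim]
  refine (hcont.tendsto.comp hz).congr' ?_
  filter_upwards [eventually_ge_atTop 2] with M hM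
  exact (postCov_eq_smul_adjugate hM hθ hβ hα T σ).symm

theorem limCov_eq_smul (σθ σβ : ℝ) (hθ : σθ ≠ 0) (hβ : σβ ≠ 0) :
    limCov σθ σβ = ((σθ ^ 2)⁻¹ + (σβ ^ 2)⁻¹)⁻¹ • !![1, -1, 0; -1, 1, 0; 0, 0, 0] := by
  have hc : σθ ^ 2 * σβ ^ 2 / (σθ ^ 2 + σβ ^ 2) = ((σθ ^ 2)⁻¹ + (σβ ^ 2)⁻¹)⁻¹ := by
    field_simp
    ring
  ext i j
  fin_cases i <;> fin_cases j <;> simp [limCov, hc]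

theorem stmt_4 (T σ σθ σβ σα : ℝ) (hT : 0 < T) (hσ : 0 < σ)
    (hθ : 0 < σθ) (hβ : 0 < σβ) (hα : 0 < σα) :
    ∀ i j : Fin 3,
      Tendsto (fun M : ℕ => postCov M T σ σθ σβ σα i j)
        atTop (nhds (limCov σθ σβ i j)) := by
  intro i j
  have h := tendsto_postCov hθ.ne' hβ.ne' hα.ne' hT.ne' hσ.ne'
  rw [← limCov_eq_smul σθ σβ hθ.ne' hβ.ne'] at h
  exact (h.apply_nhds i).apply_nhds j
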